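/- As p → +∞, the rescaled functions ũ_p converge to W in C¹_loc(ℝ): for every compact set K ⊂ ℝ, one has K ⊂ [-1/μ_p, 1/μ_p] for all p large enough and sup_K |ũ_p - W| → 0 and sup_K |ũ_p' - W'| → 0 as p → +∞, where W(s) = log( 4e^{√2 s} / (1 + e^{√2 s})² ) is the solution of -W'' = e^W on ℝ with W(0) = 0 and W'(0) = 0. -/

import Mathlib

/-!
In the variable `s = t / μ_p` the Lane–Emden equation becomes `ũ'' = -(1 + ũ/p)^p` with
`ũ(0) = ũ'(0) = 0` and `-p < ũ ≤ 0`, while `W = -2 log cosh (s/√2)` solves `W'' = -e^W` with the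
same data. Since `0 ≤ eˣ - (1 + x/p)^p ≤ 8/p` for `-p < x ≤ 0` and `exp` is 1-Lipschitz on
`(-∞, 0]`, the difference `η = ũ - W` obeys `|η''| ≤ |η| + 8/p`, and Grönwall gives
`|η|, |η'| ≤ (8/p) e^R` on `[0, R]`; evenness covers `[-R, 0]`. The interval `[-R, R]` lies in the
rescaled domain for large `p` because `u_p(0)^(p-1) ≥ 2` (from `u'' ≥ -u(0)^p` and `u(1) = 0`),
that is, `1/μ_p ≥ √(2p)`.
-/

open Real Set Filter Topology

noncomputable section

/-- `u` is the (unique) positive solution of the one-dimensional Lane–Emden problem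
`-u'' = u^p` on `(-1,1)` with `u(-1) = u(1) = 0`; it is even, positive on `(-1,1)`,
decreasing on `[0,1]`, and its sup norm is attained at `0`. -/
def IsLaneEmden (p : ℝ) (u : ℝ → ℝ) : Prop :=
  ContDiff ℝ 2 u ∧
  (∀ t ∈ Ioo (-1 : ℝ) 1, deriv (deriv u) t = -(u t ^ p)) ∧
  u (-1) = 0 ∧ u 1 = 0 ∧
  (∀ t ∈ Ioo (-1 : ℝ) 1, 0 < u t) ∧
  (∀ t : ℝ, u (-t) = u t) ∧
  (∀ ⦃s t : ℝ⦄, s ∈ Icc (0 : ℝ) 1 → t ∈ Icc (0 : ℝ) 1 → s ≤ t → u t ≤ u s) ∧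
  (∀ t ∈ Icc (-1 : ℝ) 1, u t ≤ u 0)

/-- The rescaling parameter `μ_p = (p ‖u_p‖_∞^(p-1))^(-1/2)`. -/
def mup (u : ℝ → ℝ → ℝ) (p : ℝ) : ℝ := (p * u p 0 ^ (p - 1)) ^ (-(1 / 2) : ℝ)

/-- The rescaled function `ũ_p(s) = p (u_p(μ_p s) - u_p(0)) / u_p(0)`. -/
def utilde (u : ℝ → ℝ → ℝ) (p : ℝ) (s : ℝ) : ℝ :=
  p * (u p (mup u p * s) - u p 0) / u p 0

/-- The limit profile `W(s) = log( 4 e^{√2 s} / (1 + e^{√2 s})² )`. -/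
def W (s : ℝ) : ℝ :=
  Real.log (4 * Real.exp (Real.sqrt 2 * s) / (1 + Real.exp (Real.sqrt 2 * s)) ^ 2)


theorem one_add_div_pos {p x : ℝ} (hp : 0 < p) (hx : -p < x) : 0 < 1 + x / p := by
  rw [← div_self hp.ne', ← add_div]; exact div_pos (by linarith) hp

theorem one_add_div_rpow_le_exp {p x : ℝ} (hp : 0 < p) (hx : -p < x) :
    (1 + x / p) ^ p ≤ exp x := by
  have hbase := one_add_div_pos hp hx
  rw [rpow_def_of_pos hbase, exp_le_exp]
  calc log (1 + x / p) * p ≤ (1 + x / p - 1) * p :=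
        mul_le_mul_of_nonneg_right (log_le_sub_one_of_pos hbase) hp.le
    _ = x := by field_simp; ring

/- The defect `g = x - p log (1 + x/p) ≥ 0` satisfies `g ≤ x² / (p + x)` by `log y ≥ 1 - 1/y`,
and `eˣ - (1 + x/p)^p = eˣ (1 - e^{-g}) ≤ eˣ g`. -/
theorem exp_sub_one_add_div_rpow_le {p x : ℝ} (hp : 0 < p) (hx : -p < x) :
    exp x - (1 + x / p) ^ p ≤ exp x * (x ^ 2 / (p + x)) := by
  have hpx : 0 < p + x := by linarith
  have hbase : 1 + x / p = (p + x) / p := by field_simp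
  have hbase_pos := one_add_div_pos hp hx
  set g := x - log (1 + x / p) * p
  have hrpow : (1 + x / p) ^ p = exp x * exp (-g) := by
    rw [rpow_def_of_pos hbase_pos, ← exp_add]; congr 1; simp only [g]; ring
  have hlog : x / (p + x) ≤ log (1 + x / p) := by
    have := one_sub_inv_le_log_of_pos hbase_pos
    rwa [hbase, inv_div, one_sub_div hpx.ne', add_sub_cancel_left, ← hbase] at this
  have hg : g ≤ x ^ 2 / (p + x) := by
    have : x / (p + x) * p ≤ log (1 + x / p) * p := mul_le_mul_of_nonneg_right hlog hp.le
    have hx2 : x ^ 2 / (p + x) = x - x / (p + x) * p := by field_simp; ring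
    linarith
  have hexp : 1 - g ≤ exp (-g) := by linarith [add_one_le_exp (-g)]
  rw [hrpow]
  nlinarith [exp_pos x]

theorem sq_mul_exp_le_four {x : ℝ} (hx : x ≤ 0) : x ^ 2 * exp x ≤ 4 := by
  have h1 : 1 - x / 2 ≤ exp (-x / 2) := by linarith [add_one_le_exp (-x / 2)]
  have h2 : (1 - x / 2) ^ 2 ≤ exp (-x) := by
    rw [show exp (-x) = exp (-x / 2) ^ 2 by rw [← exp_nat_mul]; ring_nf]
    exact pow_le_pow_left₀ (by linarith) h1 2
  have h3 : exp (-x) * exp x = 1 := by rw [← exp_add]; simp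
  nlinarith [exp_pos x]

theorem exp_sub_one_add_div_rpow_le_eight_div {p x : ℝ} (hp : 0 < p) (hx : -p < x)
    (hx0 : x ≤ 0) : exp x - (1 + x / p) ^ p ≤ 8 / p := by
  rcases le_or_gt (-(p / 2)) x with hx2 | hx2
  · calc exp x - (1 + x / p) ^ p ≤ exp x * (x ^ 2 / (p + x)) := exp_sub_one_add_div_rpow_le hp hx
      _ = x ^ 2 * exp x / (p + x) := by ring
      _ ≤ 4 / (p / 2) :=
        div_le_div₀ (by norm_num) (sq_mul_exp_le_four hx0) (by positivity) (by linarith)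
      _ = 8 / p := by ring
  · have hexp : exp (-(p / 2)) ≤ 2 / p := by
      rw [exp_neg, inv_le_comm₀ (exp_pos _) (by positivity), inv_div]
      linarith [add_one_le_exp (p / 2)]
    calc exp x - (1 + x / p) ^ p ≤ exp (-(p / 2)) := by
          linarith [exp_le_exp.2 hx2.le, rpow_pos_of_pos (one_add_div_pos hp hx) p]
      _ ≤ 8 / p := hexp.trans (by gcongr; norm_num)

theorem exp_sub_exp_le_abs_sub {a b : ℝ} (hb : b ≤ 0) : exp b - exp a ≤ |b - a| := by
  rcases le_total a b with hab | hab
  · have hexpb : exp b ≤ 1 := exp_le_one_iff.2 hb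
    have hexpa : exp b * (a - b + 1) ≤ exp a := by
      rw [show exp a = exp b * exp (a - b) by rw [← exp_add]; ring_nf]
      exact mul_le_mul_of_nonneg_left (add_one_le_exp _) (exp_pos b).le
    rw [abs_of_nonneg (sub_nonneg.2 hab)]
    nlinarith [exp_pos b]
  · linarith [exp_le_exp.2 hab, abs_nonneg (b - a)]

theorem abs_exp_sub_exp_le {a b : ℝ} (ha : a ≤ 0) (hb : b ≤ 0) : |exp a - exp b| ≤ |a - b| :=
  abs_sub_le_iff.2 ⟨exp_sub_exp_le_abs_sub ha, abs_sub_comm a b ▸ exp_sub_exp_le_abs_sub hb⟩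

theorem abs_exp_sub_one_add_div_rpow_le {p x w : ℝ} (hp : 0 < p) (hx : -p < x) (hx0 : x ≤ 0)
    (hw : w ≤ 0) : |exp w - (1 + x / p) ^ p| ≤ |x - w| + 8 / p := by
  have hrpow : |exp x - (1 + x / p) ^ p| ≤ 8 / p := by
    rw [abs_of_nonneg (sub_nonneg.2 (one_add_div_rpow_le_exp hp hx))]
    exact exp_sub_one_add_div_rpow_le_eight_div hp hx hx0
  calc |exp w - (1 + x / p) ^ p| ≤ |exp w - exp x| + |exp x - (1 + x / p) ^ p| :=
        abs_sub_le _ _ _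
    _ ≤ |x - w| + 8 / p := add_le_add (abs_sub_comm x w ▸ abs_exp_sub_exp_le hw hx0) hrpow

theorem abs_le_of_abs_deriv_deriv_le {η η' η'' : ℝ → ℝ} {δ R : ℝ} (hδ : 0 ≤ δ)
    (hη : ∀ t ∈ Icc 0 R, HasDerivAt η (η' t) t) (hη' : ∀ t ∈ Icc 0 R, HasDerivAt η' (η'' t) t)
    (h0 : η 0 = 0) (h0' : η' 0 = 0) (hη'' : ∀ t ∈ Ico 0 R, |η'' t| ≤ |η t| + δ) :
    ∀ t ∈ Icc 0 R, |η t| ≤ δ * (exp t - 1) ∧ |η' t| ≤ δ * (exp t - 1) := by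
  have hf : ∀ t ∈ Icc 0 R, HasDerivAt (fun t => (η t, η' t)) (η' t, η'' t) t :=
    fun t ht => (hη t ht).prodMk (hη' t ht)
  have hgronwall := norm_le_gronwallBound_of_norm_deriv_right_le (δ := 0) (K := 1) (ε := δ)
    (fun t ht => (hf t ht).continuousAt.continuousWithinAt)
    (fun t ht => (hf t (Ico_subset_Icc_self ht)).hasDerivWithinAt)
    (by simp [h0, h0'] : ‖(η 0, η' 0)‖ ≤ 0) fun t ht => by
      simp only [Prod.norm_def, Real.norm_eq_abs, one_mul]
      exact max_le (by linarith [le_max_right |η t| |η' t|])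
        ((hη'' t ht).trans (by linarith [le_max_left |η t| |η' t|]))
  intro t ht
  simpa only [Prod.norm_def, Real.norm_eq_abs, gronwallBound_of_K_ne_0 one_ne_zero, zero_mul,
    one_mul, zero_add, div_one, sub_zero, max_le_iff] using hgronwall t ht

theorem sub_mul_sq_le_of_neg_le_deriv_deriv {v v' v'' : ℝ → ℝ} {a b c : ℝ} (hab : a ≤ b)
    (hv : ∀ t ∈ Icc a b, HasDerivAt v (v' t) t) (hv' : ∀ t ∈ Icc a b, HasDerivAt v' (v'' t) t)
    (ha : v' a = 0) (hc : ∀ t ∈ Ioo a b, -c ≤ v'' t) : v a - c * (b - a) ^ 2 / 2 ≤ v b := by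
  have monotoneOn {φ φ' : ℝ → ℝ} (hφ : ∀ t ∈ Icc a b, HasDerivAt φ (φ' t) t)
      (hφ' : ∀ t ∈ Ioo a b, 0 ≤ φ' t) : MonotoneOn φ (Icc a b) :=
    monotoneOn_of_hasDerivWithinAt_nonneg (convex_Icc a b)
      (fun t ht => (hφ t ht).continuousAt.continuousWithinAt)
      (fun t ht => (hφ t (interior_subset ht)).hasDerivWithinAt) (by rwa [interior_Icc])
  have hw' : ∀ t ∈ Icc a b, HasDerivAt (fun t => v' t + c * (t - a)) (v'' t + c) t := fun t ht =>
    (hv' t ht).add (((hasDerivAt_id t).sub_const a).const_mul c) |>.congr_deriv (by simp)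
  have hw'_nonneg : ∀ t ∈ Icc a b, 0 ≤ v' t + c * (t - a) := fun t ht => by
    simpa [ha] using monotoneOn hw' (fun t ht => by linarith [hc t ht])
      (left_mem_Icc.2 hab) ht ht.1
  have hw : ∀ t ∈ Icc a b,
      HasDerivAt (fun t => v t + c * (t - a) ^ 2 / 2) (v' t + c * (t - a)) t := fun t ht =>
    (hv t ht).add ((((hasDerivAt_id t).sub_const a).pow 2).const_mul c |>.div_const 2)
      |>.congr_deriv (by simp only [id_eq]; ring)
  have := monotoneOn hw (fun t ht => hw'_nonneg t (Ioo_subset_Icc_self ht))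
    (left_mem_Icc.2 hab) (right_mem_Icc.2 hab) hab
  simp only [sub_self] at this
  linarith

theorem Function.Even.deriv {f : ℝ → ℝ} (hf : f.Even) : (deriv f).Odd := fun s => by
  simpa [funext hf] using deriv_comp_neg (f := f) (x := -s)

theorem Function.Even.apply_abs {α β : Type*} [AddGroup α] [LinearOrder α] {f : α → β}
    (hf : f.Even) (s : α) : f (|s|) = f s := by
  rcases abs_choice s with h | h <;> simp [h, hf s]

theorem Function.Odd.abs_apply_abs {α β : Type*} [AddGroup α] [LinearOrder α] [AddGroup β]
    [Lattice β] {f : α → β} (hf : f.Odd) (s : α) : |f (|s|)| = |f s| := by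
  rcases abs_choice s with h | h <;> simp [h, hf s]

theorem W_eq_neg_two_mul_log_cosh (s : ℝ) : W s = -2 * log (cosh (s / √2)) := by
  have hexp : exp (√2 * s) = exp (s / √2) ^ 2 := by
    rw [← exp_nat_mul]; congr 1; field_simp; rw [sq_sqrt zero_le_two]; ring
  have hsech : 4 * exp (√2 * s) / (1 + exp (√2 * s)) ^ 2 = (cosh (s / √2) ^ 2)⁻¹ := by
    rw [hexp, cosh_eq, exp_neg]
    have := exp_pos (s / √2)
    field_simp
    ring
  rw [W, hsech, log_inv, log_pow]
  push_cast
  ring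

theorem exp_W (s : ℝ) : exp (W s) = (cosh (s / √2) ^ 2)⁻¹ := by
  rw [W_eq_neg_two_mul_log_cosh, neg_mul, exp_neg, ← Nat.cast_ofNat, ← log_pow,
    exp_log (by positivity)]

theorem W_zero : W 0 = 0 := by simp [W_eq_neg_two_mul_log_cosh]

theorem W_nonpos (s : ℝ) : W s ≤ 0 := by
  rw [W_eq_neg_two_mul_log_cosh]
  linarith [log_nonneg (one_le_cosh (s / √2))]

theorem W_even : W.Even := fun s => by
  simp [W_eq_neg_two_mul_log_cosh, neg_div]

theorem hasDerivAt_W (s : ℝ) : HasDerivAt W (-√2 * tanh (s / √2)) s := by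
  have hc : HasDerivAt (fun s => s / √2) (1 / √2) s := (hasDerivAt_id s).div_const √2
  have h : HasDerivAt (fun s => -2 * log (cosh (s / √2)))
      (-2 * (sinh (s / √2) * (1 / √2) / cosh (s / √2))) s :=
    (hc.cosh.log (cosh_pos _).ne').const_mul (-2)
  rw [show W = fun s => -2 * log (cosh (s / √2)) from funext W_eq_neg_two_mul_log_cosh]
  refine h.congr_deriv ?_
  rw [tanh_eq_sinh_div_cosh]
  field_simp
  simp

theorem deriv_W : deriv W = fun s => -√2 * tanh (s / √2) :=
  funext fun s => (hasDerivAt_W s).deriv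

theorem hasDerivAt_neg_mul_tanh (s : ℝ) :
    HasDerivAt (fun s => -√2 * tanh (s / √2)) (-exp (W s)) s := by
  have hc : HasDerivAt (fun s => s / √2) (1 / √2) s := (hasDerivAt_id s).div_const √2
  have h := (hc.sinh.div hc.cosh (cosh_pos _).ne').const_mul (-√2)
  simp_rw [tanh_eq_sinh_div_cosh]
  refine h.congr_deriv ?_
  rw [exp_W]
  field_simp
  simp [cosh_sq]

namespace IsLaneEmden

variable {p : ℝ} {v : ℝ → ℝ}

theorem even (h : IsLaneEmden p v) : v.Even := h.2.2.2.2.2.1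

theorem deriv_deriv (h : IsLaneEmden p v) {t : ℝ} (ht : t ∈ Ioo (-1) 1) :
    deriv (deriv v) t = -(v t ^ p) := h.2.1 t ht

theorem apply_one (h : IsLaneEmden p v) : v 1 = 0 := h.2.2.2.1

theorem pos (h : IsLaneEmden p v) {t : ℝ} (ht : t ∈ Ioo (-1) 1) : 0 < v t := h.2.2.2.2.1 t ht

theorem pos_zero (h : IsLaneEmden p v) : 0 < v 0 := h.pos (by norm_num)

theorem le_apply_zero (h : IsLaneEmden p v) {t : ℝ} (ht : t ∈ Icc (-1) 1) : v t ≤ v 0 :=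
  h.2.2.2.2.2.2.2 t ht

theorem hasDerivAt (h : IsLaneEmden p v) (t : ℝ) : HasDerivAt v (deriv v t) t :=
  (h.1.differentiable (by norm_num) t).hasDerivAt

theorem hasDerivAt_deriv (h : IsLaneEmden p v) (t : ℝ) :
    HasDerivAt (deriv v) (deriv (deriv v) t) t :=
  ((h.1.iterate_deriv' 1 1).differentiable (by norm_num) t).hasDerivAt

theorem deriv_zero (h : IsLaneEmden p v) : deriv v 0 = 0 := by
  have := h.even.deriv 0
  rw [neg_zero] at this
  linarith

/- `v'' ≥ -v(0)^p` on `[0, 1]`, so `0 = v(1) ≥ v(0) - v(0)^p / 2`. -/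
theorem two_le_rpow (h : IsLaneEmden p v) (hp : 1 < p) : 2 ≤ v 0 ^ (p - 1) := by
  have hM := h.pos_zero
  have hlower := sub_mul_sq_le_of_neg_le_deriv_deriv zero_le_one (fun t _ => h.hasDerivAt t)
    (fun t _ => h.hasDerivAt_deriv t) h.deriv_zero (c := v 0 ^ p) fun t ht => by
      have ht' : t ∈ Ioo (-1 : ℝ) 1 := ⟨by linarith [ht.1], ht.2⟩
      rw [h.deriv_deriv ht', neg_le_neg_iff]
      exact rpow_le_rpow (h.pos ht').le (h.le_apply_zero (Ioo_subset_Icc_self ht')) (by linarith)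
  rw [h.apply_one, show v 0 ^ p = v 0 ^ (p - 1) * v 0 by
    rw [← rpow_add_one hM.ne', sub_add_cancel]] at hlower
  nlinarith

end IsLaneEmden

def utildeDeriv (u : ℝ → ℝ → ℝ) (p s : ℝ) : ℝ :=
  p / u p 0 * mup u p * deriv (u p) (mup u p * s)

section Rescaling

variable {u : ℝ → ℝ → ℝ} {p : ℝ}

theorem mup_pos (hL : IsLaneEmden p (u p)) (hp : 0 < p) : 0 < mup u p :=
  rpow_pos_of_pos (mul_pos hp (rpow_pos_of_pos hL.pos_zero _)) _

theorem mup_sq (hL : IsLaneEmden p (u p)) (hp : 0 ≤ p) :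
    mup u p ^ 2 = (p * u p 0 ^ (p - 1))⁻¹ := by
  rw [mup, ← rpow_natCast, ← rpow_mul (mul_nonneg hp (rpow_nonneg hL.pos_zero.le _))]
  norm_num [rpow_neg_one]

theorem sqrt_two_mul_le_inv_mup (hL : IsLaneEmden p (u p)) (hp : 1 < p) :
    √(2 * p) ≤ 1 / mup u p := by
  rw [sqrt_le_left (one_div_pos.2 (mup_pos hL (by linarith))).le, div_pow,
    mup_sq hL (by linarith), one_pow, one_div, inv_inv]
  nlinarith [hL.two_le_rpow hp]

theorem mup_mul_mem_Ioo (hL : IsLaneEmden p (u p)) (hp : 0 < p) {R t : ℝ}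
    (hR : R < 1 / mup u p) (ht : |t| ≤ R) : mup u p * t ∈ Ioo (-1) 1 := by
  have hμ := mup_pos hL hp
  rw [mem_Ioo, ← abs_lt, abs_mul, abs_of_pos hμ]
  calc mup u p * |t| ≤ mup u p * R := mul_le_mul_of_nonneg_left ht hμ.le
    _ < 1 := by rwa [lt_div_iff₀' hμ] at hR

theorem utilde_zero : utilde u p 0 = 0 := by simp [utilde]

theorem utilde_even (hL : IsLaneEmden p (u p)) : (utilde u p).Even := fun s => by
  simp only [utilde, mul_neg, hL.even _]

theorem one_add_utilde_div (hp : p ≠ 0) (hM : u p 0 ≠ 0) (s : ℝ) :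
    1 + utilde u p s / p = u p (mup u p * s) / u p 0 := by
  unfold utilde; field_simp; ring

theorem utilde_nonpos (hL : IsLaneEmden p (u p)) (hp : 0 ≤ p) {s : ℝ}
    (hs : mup u p * s ∈ Icc (-1) 1) : utilde u p s ≤ 0 :=
  div_nonpos_of_nonpos_of_nonneg
    (mul_nonpos_of_nonneg_of_nonpos hp (sub_nonpos.2 (hL.le_apply_zero hs))) hL.pos_zero.le

theorem neg_lt_utilde (hL : IsLaneEmden p (u p)) (hp : 0 < p) {s : ℝ}
    (hs : mup u p * s ∈ Ioo (-1) 1) : -p < utilde u p s := by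
  have hpos : 0 < 1 + utilde u p s / p := by
    rw [one_add_utilde_div hp.ne' hL.pos_zero.ne']
    exact div_pos (hL.pos hs) hL.pos_zero
  have := (lt_div_iff₀ hp).1 (show -1 < utilde u p s / p by linarith)
  linarith

theorem hasDerivAt_utilde (hL : IsLaneEmden p (u p)) (s : ℝ) :
    HasDerivAt (utilde u p) (utildeDeriv u p s) s :=
  (((hL.hasDerivAt _).comp s ((hasDerivAt_id s).const_mul (mup u p))).sub_const (u p 0)
    |>.const_mul p |>.div_const (u p 0)).congr_deriv
    (by simp only [id_eq, mul_one, utildeDeriv]; ring)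

/- The Lane–Emden equation in the rescaled variables. -/
theorem hasDerivAt_utildeDeriv (hL : IsLaneEmden p (u p)) (hp : 0 < p) {s : ℝ}
    (hs : mup u p * s ∈ Ioo (-1) 1) :
    HasDerivAt (utildeDeriv u p) (-(1 + utilde u p s / p) ^ p) s := by
  have hM := hL.pos_zero
  refine (((hL.hasDerivAt_deriv _).comp s ((hasDerivAt_id s).const_mul (mup u p))).const_mul
    (p / u p 0 * mup u p)).congr_deriv ?_
  have hμ := mup_sq hL hp.le
  rw [one_add_utilde_div hp.ne' hM.ne', div_rpow (hL.pos hs).le hM.le, id, mul_one,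
    hL.deriv_deriv hs, show u p 0 ^ p = u p 0 ^ (p - 1) * u p 0 by
      rw [← rpow_add_one hM.ne', sub_add_cancel]]
  have hA : 0 < u p 0 ^ (p - 1) := rpow_pos_of_pos hM _
  field_simp at hμ ⊢
  rw [neg_inj]
  linear_combination (u p (mup u p * s) ^ p) * hμ

theorem abs_utilde_sub_W_le_of_mem_Icc (hL : IsLaneEmden p (u p)) (hp : 0 < p) {R : ℝ}
    (hR : R < 1 / mup u p) :
    ∀ t ∈ Icc 0 R, |(utilde u p - W) t| ≤ 8 / p * (exp t - 1) ∧
      |utildeDeriv u p t - -√2 * tanh (t / √2)| ≤ 8 / p * (exp t - 1) := by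
  have hin {t : ℝ} (ht : t ∈ Icc 0 R) : mup u p * t ∈ Ioo (-1) 1 :=
    mup_mul_mem_Ioo hL hp hR ((abs_of_nonneg ht.1).le.trans ht.2)
  refine abs_le_of_abs_deriv_deriv_le (by positivity)
    (fun t _ => (hasDerivAt_utilde hL t).sub (hasDerivAt_W t))
    (fun t ht => (hasDerivAt_utildeDeriv hL hp (hin ht)).sub (hasDerivAt_neg_mul_tanh t))
    (by simp [utilde_zero, W_zero]) (by simp [utildeDeriv, hL.deriv_zero]) fun t ht => ?_
  rw [neg_sub_neg]
  exact abs_exp_sub_one_add_div_rpow_le hp (neg_lt_utilde hL hp (hin (Ico_subset_Icc_self ht)))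
    (utilde_nonpos hL hp.le (Ioo_subset_Icc_self (hin (Ico_subset_Icc_self ht)))) (W_nonpos t)

theorem abs_utilde_sub_W_le (hL : IsLaneEmden p (u p)) (hp : 0 < p) {R s : ℝ}
    (hR : R < 1 / mup u p) (hs : |s| ≤ R) :
    |utilde u p s - W s| ≤ 8 / p * exp R ∧
      |deriv (utilde u p) s - deriv W s| ≤ 8 / p * exp R := by
  obtain ⟨hval, hslope⟩ := abs_utilde_sub_W_le_of_mem_Icc hL hp hR |s| ⟨abs_nonneg s, hs⟩
  have hbound : 8 / p * (exp |s| - 1) ≤ 8 / p * exp R := by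
    gcongr; linarith [exp_le_exp.2 hs]
  have heven : (utilde u p - W).Even := fun t => by
    simp only [Pi.sub_apply, utilde_even hL t, W_even t]
  have hderiv (x : ℝ) : deriv (utilde u p - W) x = utildeDeriv u p x - -√2 * tanh (x / √2) :=
    ((hasDerivAt_utilde hL x).sub (hasDerivAt_W x)).deriv
  constructor
  · calc |utilde u p s - W s| = |(utilde u p - W) (|s|)| := by rw [heven.apply_abs]; rfl
      _ ≤ 8 / p * exp R := hval.trans hbound
  · calc |deriv (utilde u p) s - deriv W s| = |deriv (utilde u p - W) (|s|)| := by
          rw [heven.deriv.abs_apply_abs, hderiv, (hasDerivAt_utilde hL s).deriv,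
            (hasDerivAt_W s).deriv]
      _ ≤ 8 / p * exp R := by rw [hderiv]; exact hslope.trans hbound

end Rescaling

/-- As `p → +∞`, the rescaled functions `ũ_p` converge to `W` in `C¹_loc(ℝ)`, where
`W(s) = log(4 e^{√2 s}/(1+e^{√2 s})²)` is the solution of `-W'' = e^W`, `W(0) = W'(0) = 0`. -/
theorem rescaled_convergence_to_W
    (u : ℝ → ℝ → ℝ) (hu : ∀ p : ℝ, 1 < p → IsLaneEmden p (u p)) :
    ((∀ s : ℝ, deriv (deriv W) s = -Real.exp (W s)) ∧ W 0 = 0 ∧ deriv W 0 = 0) ∧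
    ∀ K : Set ℝ, IsCompact K →
      (∃ p₀ : ℝ, ∀ p ≥ p₀, ∀ s ∈ K, |s| ≤ 1 / mup u p) ∧
      (∀ ε > (0 : ℝ), ∃ p₀ : ℝ, ∀ p ≥ p₀, ∀ s ∈ K,
        |utilde u p s - W s| < ε ∧ |deriv (utilde u p) s - deriv W s| < ε) := by
  refine ⟨⟨fun s => by rw [deriv_W]; exact (hasDerivAt_neg_mul_tanh s).deriv, W_zero,
    by simp [deriv_W]⟩, fun K hK => ?_⟩
  obtain ⟨C, hC⟩ := hK.isBounded.exists_norm_le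
  set R := max C 0
  have hKR : ∀ s ∈ K, |s| ≤ R := fun s hs => (hC s hs).trans (le_max_left C 0)
  have hlarge : ∀ᶠ p in atTop, 1 < p ∧ R < 1 / mup u p := by
    filter_upwards [eventually_gt_atTop 1, eventually_gt_atTop (R ^ 2 / 2)] with p hp hpR
    exact ⟨hp, ((lt_sqrt (le_max_right C 0)).2 (by linarith)).trans_le
      (sqrt_two_mul_le_inv_mup (hu p hp) hp)⟩
  refine ⟨?_, fun ε hε => ?_⟩
  · obtain ⟨p₀, hp₀⟩ := eventually_atTop.1 hlarge
    exact ⟨p₀, fun p hp s hs => (hKR s hs).trans (hp₀ p hp).2.le⟩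
  · have hsmall : ∀ᶠ p in atTop, 8 / p * exp R < ε :=
      ((tendsto_const_nhds.div_atTop tendsto_id).mul_const (exp R)).eventually_lt_const
        (by simpa using hε)
    obtain ⟨p₀, hp₀⟩ := eventually_atTop.1 (hlarge.and hsmall)
    refine ⟨p₀, fun p hp s hs => ?_⟩
    obtain ⟨⟨hp1, hR⟩, hε'⟩ := hp₀ p hp
    have h := abs_utilde_sub_W_le (hu p hp1) (by linarith) hR (hKR s hs)
    exact ⟨h.1.trans_lt hε', h.2.trans_lt hε'⟩
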